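/- Let B ∈ M_{n×m}(ℝ) and let W ∈ M_{m×m}(ℝ) be a diagonal matrix with strictly positive diagonal entries w₁,…,w_m. Then every non-zero eigenvalue λ of the symmetric matrix B·W·Bᵀ satisfies λ ≥ min_{1≤j≤m} w_j · ( (Bᵀ·B)_{jj} − Σ_{i≠j} |(Bᵀ·B)_{ij}| ). (When the entries of B lie in {−1,0,1}, the quantity (Bᵀ·B)_{jj} equals the number of non-zero entries of the j-th column of B, and |(Bᵀ·B)_{ij}| is the absolute value of the standard inner product of the i-th and j-th columns of B, so this is the Cheeger-type lower bound min_j Â(P_j)/V(P_j) ≤ λ_min for the up persistent Laplacian of an unweighted q-non-branching pair.) -/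

import Mathlib

/-!
Writing `B * W * Bᵀ = B * (W * Bᵀ)`, every non-zero eigenvalue of `B * W * Bᵀ` is also an
eigenvalue of `W * Bᵀ * B = diagonal w * (Bᵀ * B)`. Gershgorin's theorem applied to the rows of
this matrix gives the bound, since row `j` is row `j` of the symmetric matrix `Bᵀ * B` scaled by
`w j > 0`.
-/

open Matrix Module.End

namespace Matrix

theorem isSymm_transpose_mul_self' {R l p : Type*} [NonUnitalCommSemiring R] [Fintype l]
    (B : Matrix l p R) : (Bᵀ * B).IsSymm := by
  rw [IsSymm, transpose_mul, transpose_transpose]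

variable {K : Type*} [Field K] {l p : Type*} [Fintype l] [DecidableEq l] [Fintype p]
  [DecidableEq p]

theorem hasEigenvalue_toLin'_mul_comm {A : Matrix l p K} {C : Matrix p l K} {μ : K} (hμ : μ ≠ 0)
    (h : HasEigenvalue (toLin' (A * C)) μ) : HasEigenvalue (toLin' (C * A)) μ := by
  obtain ⟨v, hv_mem, hv_ne⟩ := h.exists_hasEigenvector
  rw [mem_eigenspace_iff, toLin'_apply] at hv_mem
  have hCv : (C * A) *ᵥ (C *ᵥ v) = μ • C *ᵥ v := by
    rw [mulVec_mulVec, Matrix.mul_assoc, ← mulVec_mulVec, hv_mem, mulVec_smul]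
  have hCv_ne : C *ᵥ v ≠ 0 := by
    intro h0
    rw [← mulVec_mulVec, h0, mulVec_zero, eq_comm, smul_eq_zero] at hv_mem
    exact hv_mem.elim hμ hv_ne
  exact hasEigenvalue_of_hasEigenvector
    ⟨mem_eigenspace_iff.mpr (by rwa [toLin'_apply]), hCv_ne⟩

end Matrix

section Gershgorin

variable {n : Type*} [Fintype n] [DecidableEq n]

theorem exists_diag_sub_sum_abs_le_of_hasEigenvalue {A : Matrix n n ℝ} {μ : ℝ}
    (h : HasEigenvalue (toLin' A) μ) : ∃ k, A k k - ∑ j ∈ Finset.univ.erase k, |A k j| ≤ μ := by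
  obtain ⟨k, hk⟩ := eigenvalue_mem_ball h
  refine ⟨k, ?_⟩
  rw [Metric.mem_closedBall, Real.dist_eq] at hk
  simp only [Real.norm_eq_abs] at hk
  linarith [neg_abs_le (μ - A k k)]

theorem exists_weighted_diag_sub_sum_abs_le_of_hasEigenvalue {G : Matrix n n ℝ} (hG : G.IsSymm)
    {w : n → ℝ} (hw : ∀ j, 0 ≤ w j) {μ : ℝ} (h : HasEigenvalue (toLin' (diagonal w * G)) μ) :
    ∃ j, w j * (G j j - ∑ i ∈ Finset.univ.filter (fun i => i ≠ j), |G i j|) ≤ μ := by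
  obtain ⟨j, hj⟩ := exists_diag_sub_sum_abs_le_of_hasEigenvalue h
  refine ⟨j, le_of_eq_of_le ?_ hj⟩
  simp only [diagonal_mul, abs_mul, abs_of_nonneg (hw j), ← Finset.mul_sum,
    Finset.filter_ne', hG.apply j]
  ring

end Gershgorin

theorem stmt11 {n m : ℕ} (B : Matrix (Fin n) (Fin m) ℝ) (w : Fin m → ℝ)
    (hw : ∀ j, 0 < w j) (W : Matrix (Fin m) (Fin m) ℝ) (hW : W = Matrix.diagonal w)
    (lam : ℝ) (hlam : lam ≠ 0)
    (heig : ∃ v : Fin n → ℝ, v ≠ 0 ∧ (B * W * B.transpose).mulVec v = lam • v) :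
    ∃ j : Fin m,
      w j * ((B.transpose * B) j j -
        ∑ i ∈ Finset.univ.filter (fun i => i ≠ j), |(B.transpose * B) i j|) ≤ lam := by
  obtain ⟨v, hv_ne, hv⟩ := heig
  have hBWBt : HasEigenvalue (toLin' (B * (W * Bᵀ))) lam :=
    hasEigenvalue_of_hasEigenvector
      ⟨mem_eigenspace_iff.mpr (by rwa [toLin'_apply, ← Matrix.mul_assoc]), hv_ne⟩
  have hWBtB : HasEigenvalue (toLin' (diagonal w * (Bᵀ * B))) lam := by
    simpa only [hW, Matrix.mul_assoc] using hasEigenvalue_toLin'_mul_comm hlam hBWBt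
  exact exists_weighted_diag_sub_sum_abs_le_of_hasEigenvalue (isSymm_transpose_mul_self' B)
    (fun j => (hw j).le) hWBtB
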